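/- Let T be a binormal bounded operator on a complex Hilbert space H with polar decomposition T = U|T|, and for real α, β > 0 set T_{α,β} = |T|^α U |T|^β. Then |T_{α,β}| = (U^*|T|^α U)·|T|^β = |T|^β·(U^*|T|^α U), and |T_{α,β}^*| = |T|^α·|T^*|^β = |T^*|^β·|T|^α. -/

import Mathlib

open ContinuousLinearMap

variable {H : Type*} [NormedAddCommGroup H] [InnerProductSpace ℂ H] [CompleteSpace H]

/-- The absolute value `|T| = (T^*T)^(1/2)` of a bounded operator on a complex
Hilbert space, defined via the continuous functional calculus. -/
noncomputable def absOp (T : H →L[ℂ] H) : H →L[ℂ] H :=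
  cfc Real.sqrt (adjoint T * T)

/-- The orthogonal projection of `H` onto the closure of the range of `T`,
regarded as an operator on `H`. -/
noncomputable def rangeProjOp (T : H →L[ℂ] H) : H →L[ℂ] H :=
  (LinearMap.range (T : H →ₗ[ℂ] H)).topologicalClosure.subtypeL ∘L
    Submodule.orthogonalProjectionOnto (LinearMap.range (T : H →ₗ[ℂ] H)).topologicalClosure

/-- `U` is a partial isometry: `U^*U` is an orthogonal projection
(a self-adjoint idempotent). -/
def IsPartialIsometryOp (U : H →L[ℂ] H) : Prop :=
  IsSelfAdjoint (adjoint U * U) ∧ (adjoint U * U) * (adjoint U * U) = adjoint U * U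

/-- `T = U|T|` is the polar decomposition of `T`: `U` is a partial isometry and
`U^*U` is the orthogonal projection onto the closure of the range of `T^*`. -/
def IsPolarDecompositionOp (T U : H →L[ℂ] H) : Prop :=
  T = U * absOp T ∧ IsPartialIsometryOp U ∧ adjoint U * U = rangeProjOp (adjoint T)

/-- For a positive operator `T` and real `α`, the power `T^α` defined by the
continuous functional calculus. -/
noncomputable def powOp (T : H →L[ℂ] H) (α : ℝ) : H →L[ℂ] H :=
  cfc (fun x : ℝ => x ^ α) T

/-! Write `A = |T|`, `B = |T^*|` and `S = A^α U A^β`. Since `T U^*U = T`, the partial isometry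
`U` intertwines `T^*T` with `TT^*`, hence (functional calculus) `U A^γ = B^γ U` for `γ ≥ 0`;
moreover `UU^*` fixes `TT^*`, hence `B^β`, and binormality makes `A^α` commute with `B^β`.
These relations alone show that `(U^*A^αU) A^β` and `A^α B^β` are positive with squares `S^*S`
and `SS^*`, so they are `|S|` and `|S^*|` by uniqueness of positive square roots. -/

section SemiconjCFC

variable {𝕜 A : Type*} {p : A → Prop} [RCLike 𝕜] [Ring A] [StarRing A] [Algebra 𝕜 A]
  [TopologicalSpace A] [ContinuousFunctionalCalculus 𝕜 A p] [IsSemitopologicalRing A] [T2Space A]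

protected theorem SemiconjBy.cfc {a b x : A} (h : SemiconjBy x a b)
    (h_star : SemiconjBy x (star a) (star b)) (f : 𝕜 → 𝕜)
    (hf : ContinuousOn f (spectrum 𝕜 a ∪ spectrum 𝕜 b))
    (ha : p a := by cfc_tac) (hb : p b := by cfc_tac) :
    SemiconjBy x (cfc f a) (cfc f b) := by
  set s := spectrum 𝕜 a ∪ spectrum 𝕜 b
  have : CompactSpace s := isCompact_iff_compactSpace.mp <|
    (ContinuousFunctionalCalculus.isCompact_spectrum a).union
      (ContinuousFunctionalCalculus.isCompact_spectrum b)
  have has : spectrum 𝕜 a ⊆ s := Set.subset_union_left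
  have hbs : spectrum 𝕜 b ⊆ s := Set.subset_union_right
  have key (g : C(s, 𝕜)) :
      SemiconjBy x (cfcHomSuperset ha has g) (cfcHomSuperset hb hbs g) := by
    induction g using ContinuousMap.induction_on_of_compact with
    | const r =>
      have hr : ContinuousMap.const s r = algebraMap 𝕜 C(s, 𝕜) r := rfl
      rw [hr, AlgHomClass.commutes, AlgHomClass.commutes]
      exact Algebra.commute_algebraMap_right r x
    | id => rwa [cfcHomSuperset_id, cfcHomSuperset_id]
    | star_id => rwa [map_star, map_star, cfcHomSuperset_id, cfcHomSuperset_id]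
    | add f g hf hg => simpa only [map_add] using hf.add_right hg
    | mul f g hf hg => simpa only [map_mul] using hf.mul_right hg
    | frequently f hf =>
      have hclosed : IsClosed {g | x * cfcHomSuperset ha has g = cfcHomSuperset hb hbs g * x} :=
        isClosed_eq ((cfcHomSuperset_continuous ha has).const_mul x)
          ((cfcHomSuperset_continuous hb hbs).mul_const x)
      exact hclosed.closure_subset (mem_closure_of_frequently_of_tendsto hf Filter.tendsto_id)
  convert key ⟨s.domRestrict f, hf.domRestrict⟩ using 1
  · rw [cfc_apply f a ha (hf.mono has)]; rfl
  · rw [cfc_apply f b hb (hf.mono hbs)]; rfl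

end SemiconjCFC

section SelfAdjointCFC

variable {A : Type*} [Ring A] [StarRing A] [Algebra ℝ A] [TopologicalSpace A]
  [ContinuousFunctionalCalculus ℝ A IsSelfAdjoint] [IsSemitopologicalRing A] [T2Space A]

theorem SemiconjBy.cfc_of_isSelfAdjoint {a b x : A} (h : SemiconjBy x a b) (f : ℝ → ℝ)
    (hf : ContinuousOn f (spectrum ℝ a ∪ spectrum ℝ b))
    (ha : IsSelfAdjoint a := by cfc_tac) (hb : IsSelfAdjoint b := by cfc_tac) :
    SemiconjBy x (cfc f a) (cfc f b) :=
  h.cfc (by rwa [ha.star_eq, hb.star_eq]) f hf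

theorem mul_cfc_eq_of_mul_eq {a e : A} (h : e * a = a) (f : ℝ → ℝ)
    (hf : ContinuousOn f (spectrum ℝ a ∪ {0})) (hf0 : f 0 = 0)
    (ha : IsSelfAdjoint a := by cfc_tac) : e * cfc f a = cfc f a := by
  rcases subsingleton_or_nontrivial A with hA | hA
  · exact Subsingleton.elim _ _
  have hsemi : SemiconjBy (1 - e) a 0 := by
    rw [SemiconjBy, sub_mul, one_mul, h, sub_self, zero_mul]
  have := hsemi.cfc_of_isSelfAdjoint f (by rwa [spectrum.zero_eq])
  rwa [SemiconjBy, cfc_apply_zero, hf0, map_zero, zero_mul, sub_mul, one_mul, sub_eq_zero,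
    eq_comm] at this

end SelfAdjointCFC

theorem mul_star_mul_self_of_isIdempotentElem {R : Type*} [NonUnitalNormedRing R] [StarRing R]
    [CStarRing R] {u : R} (h : IsIdempotentElem (star u * u)) : u * (star u * u) = u := by
  set P := star u * u with hP
  have hPsa : star P = P := by rw [hP, star_mul, star_star]
  have : star (u - u * P) * (u - u * P) = 0 :=
    calc star (u - u * P) * (u - u * P) = P - P * P - P * P + P * P * P := by
          rw [star_sub, star_mul, hPsa, hP]; noncomm_ring
      _ = 0 := by rw [h.eq, h.eq]; abel
  exact (sub_eq_zero.mp (CStarRing.star_mul_self_eq_zero_iff _ |>.mp this)).symm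

section Aluthge

variable {R : Type*} [Ring R] [StarRing R] {a b c d u : R}

theorem SemiconjBy.star_mul_eq_mul_star (h : SemiconjBy u b c) (hb : IsSelfAdjoint b)
    (hc : IsSelfAdjoint c) : star u * c = b * star u := by
  simpa only [star_mul, hb.star_eq, hc.star_eq] using (congrArg star h.eq).symm

theorem SemiconjBy.commute_star_mul_mul (h : SemiconjBy u b c) (hb : IsSelfAdjoint b)
    (hc : IsSelfAdjoint c) (hd : Commute d c) : Commute (star u * d * u) b :=
  calc star u * d * u * b = star u * (d * c) * u := by rw [mul_assoc _ u, h.eq]; noncomm_ring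
    _ = star u * c * (d * u) := by rw [hd.eq]; noncomm_ring
    _ = b * (star u * d * u) := by rw [h.star_mul_eq_mul_star hb hc]; noncomm_ring

theorem SemiconjBy.star_mul_self_eq_of_commute (h : SemiconjBy u b c) (ha : IsSelfAdjoint a)
    (hb : IsSelfAdjoint b) (hc : IsSelfAdjoint c) (hac : Commute a c)
    (hfix : u * star u * c = c) :
    star (a * u * b) * (a * u * b) = star u * a * u * b * (star u * a * u * b) := by
  have hbb : u * (b * b) = c * c * u := (h.mul_right h).eq
  have hfix2 : u * star u * (c * c) = c * c := by rw [← mul_assoc, hfix]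
  have hcc : Commute a (c * c) := hac.mul_right hac
  have hX := h.commute_star_mul_mul hb hc hac
  have hY := h.commute_star_mul_mul hb hc (hac.mul_left hac)
  calc star (a * u * b) * (a * u * b) = b * (star u * (a * a) * u) * b := by
        rw [star_mul, star_mul, ha.star_eq, hb.star_eq]; noncomm_ring
    _ = star u * (a * a) * (u * (b * b)) := by rw [← hY.eq]; noncomm_ring
    _ = star u * a * (a * (c * c)) * u := by rw [hbb]; noncomm_ring
    _ = star u * a * (u * star u * (c * c)) * a * u := by rw [hfix2, hcc.eq]; noncomm_ring
    _ = star u * a * (u * star u) * (a * (c * c)) * u := by rw [hcc.eq]; noncomm_ring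
    _ = star u * a * (u * star u) * a * (u * (b * b)) := by rw [hbb]; noncomm_ring
    _ = star u * a * u * (star u * a * u * b) * b := by noncomm_ring
    _ = star u * a * u * (b * (star u * a * u)) * b := by rw [hX.eq]
    _ = star u * a * u * b * (star u * a * u * b) := by noncomm_ring

theorem SemiconjBy.mul_star_self_eq_of_commute (h : SemiconjBy u b c) (ha : IsSelfAdjoint a)
    (hb : IsSelfAdjoint b) (hc : IsSelfAdjoint c) (hac : Commute a c)
    (hfix : u * star u * c = c) :
    a * u * b * star (a * u * b) = a * c * (a * c) := by
  have hfix' : c * (u * star u) = c := by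
    simpa only [star_mul, star_star, hc.star_eq, mul_assoc] using congrArg star hfix
  calc a * u * b * star (a * u * b) = a * (u * b) * (b * star u) * a := by
        rw [star_mul, star_mul, ha.star_eq, hb.star_eq]; noncomm_ring
    _ = a * (c * (u * star u) * c) * a := by
        rw [← h.star_mul_eq_mul_star hb hc, h.eq]; noncomm_ring
    _ = a * c * (a * c) := by
        rw [hfix', mul_assoc a (c * c) a, mul_assoc c c a, ← hac.eq]; noncomm_ring

end Aluthge

theorem absOp_eq_cfcAbs (T : H →L[ℂ] H) : absOp T = CFC.abs T := by
  rw [CFC.abs, CFC.sqrt_eq_real_sqrt _ (star_mul_self_nonneg T), cfcₙ_eq_cfc, star_eq_adjoint]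
  rfl

theorem absOp_nonneg (T : H →L[ℂ] H) : 0 ≤ absOp T :=
  absOp_eq_cfcAbs T ▸ CFC.abs_nonneg T

theorem absOp_mul_absOp (T : H →L[ℂ] H) : absOp T * absOp T = adjoint T * T := by
  rw [absOp_eq_cfcAbs, CFC.abs_mul_abs, star_eq_adjoint]

theorem absOp_eq_of_mul_self_eq {S R : H →L[ℂ] H} (hR : 0 ≤ R) (h : adjoint S * S = R * R) :
    absOp S = R := by
  rw [absOp_eq_cfcAbs, CFC.abs, star_eq_adjoint]
  exact CFC.sqrt_unique h.symm

theorem absOp_adjoint (T : H →L[ℂ] H) : absOp (adjoint T) = cfc Real.sqrt (T * adjoint T) := by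
  rw [absOp, adjoint_adjoint]

theorem powOp_nonneg {A : H →L[ℂ] H} (hA : 0 ≤ A) (γ : ℝ) : 0 ≤ powOp A γ :=
  cfc_nonneg fun _ hx => Real.rpow_nonneg (spectrum_nonneg_of_nonneg hA hx) γ

theorem rangeProjOp_mul_eq_self (S : H →L[ℂ] H) : rangeProjOp S * S = S := by
  ext y
  exact Submodule.starProjection_eq_self_iff.mpr
    (Submodule.le_topologicalClosure _ (LinearMap.mem_range_self _ y))

theorem IsPartialIsometryOp.mul_adjoint_mul_self {U : H →L[ℂ] H} (hU : IsPartialIsometryOp U) :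
    U * (adjoint U * U) = U := by
  have h := hU.2
  rw [← star_eq_adjoint] at h ⊢
  exact mul_star_mul_self_of_isIdempotentElem h

def IsBinormal (T : H →L[ℂ] H) : Prop :=
  Commute (adjoint T * T) (T * adjoint T)

theorem IsBinormal.commute_powOp {T : H →L[ℂ] H} (hT : IsBinormal T) (γ δ : ℝ) :
    Commute (powOp (absOp T) γ) (powOp (absOp (adjoint T)) δ) := by
  have hAB : Commute (absOp T) (absOp (adjoint T)) := by
    rw [absOp_adjoint]
    exact ((hT.cfc_real Real.sqrt).symm.cfc_real Real.sqrt).symm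
  exact ((hAB.cfc_real _).symm.cfc_real _).symm

namespace IsPolarDecompositionOp

variable {T U : H →L[ℂ] H} (hT : IsPolarDecompositionOp T U)
include hT

theorem mul_adjoint_mul_eq_self : T * (adjoint U * U) = T := by
  have h := congrArg star (rangeProjOp_mul_eq_self (adjoint T))
  rwa [← hT.2.2, star_mul, hT.2.1.1.star_eq, star_eq_adjoint, adjoint_adjoint] at h

theorem adjoint_eq : adjoint T = absOp T * adjoint U := by
  conv_lhs => rw [hT.1]
  rw [← star_eq_adjoint, star_mul, (absOp_nonneg T).isSelfAdjoint.star_eq, star_eq_adjoint]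

theorem mul_adjoint_self_eq : T * adjoint T = U * (adjoint T * T) * adjoint U := by
  rw [← absOp_mul_absOp]
  calc T * adjoint T = U * absOp T * (absOp T * adjoint U) := by rw [← hT.adjoint_eq, ← hT.1]
    _ = U * (absOp T * absOp T) * adjoint U := by noncomm_ring

theorem semiconjBy : SemiconjBy U (adjoint T * T) (T * adjoint T) :=
  calc U * (adjoint T * T) = U * (adjoint T * (T * (adjoint U * U))) := by
        rw [hT.mul_adjoint_mul_eq_self]
    _ = T * adjoint T * U := by rw [hT.mul_adjoint_self_eq]; noncomm_ring

theorem mul_powOp {γ : ℝ} (hγ : 0 ≤ γ) :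
    U * powOp (absOp T) γ = powOp (absOp (adjoint T)) γ * U := by
  have hA : SemiconjBy U (absOp T) (absOp (adjoint T)) := by
    rw [absOp_adjoint]
    exact hT.semiconjBy.cfc_of_isSelfAdjoint _ Real.continuous_sqrt.continuousOn
      (.star_mul_self T) (.mul_star_self T)
  exact hA.cfc_of_isSelfAdjoint _ (Real.continuous_rpow_const hγ).continuousOn
    (absOp_nonneg T).isSelfAdjoint (absOp_nonneg _).isSelfAdjoint

theorem mul_adjoint_mul_powOp_adjoint {γ : ℝ} (hγ : 0 < γ) :
    U * adjoint U * powOp (absOp (adjoint T)) γ = powOp (absOp (adjoint T)) γ := by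
  have hTT : U * adjoint U * (T * adjoint T) = T * adjoint T := by
    rw [hT.mul_adjoint_self_eq]
    calc U * adjoint U * (U * (adjoint T * T) * adjoint U)
        = U * (adjoint U * U) * (adjoint T * T) * adjoint U := by noncomm_ring
      _ = U * (adjoint T * T) * adjoint U := by rw [hT.2.1.mul_adjoint_mul_self]
  have hB : U * adjoint U * absOp (adjoint T) = absOp (adjoint T) := by
    rw [absOp_adjoint]
    exact mul_cfc_eq_of_mul_eq hTT _ Real.continuous_sqrt.continuousOn Real.sqrt_zero
      (.mul_star_self T)
  exact mul_cfc_eq_of_mul_eq hB _ (Real.continuous_rpow_const hγ.le).continuousOn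
    (Real.zero_rpow hγ.ne') (absOp_nonneg _).isSelfAdjoint

end IsPolarDecompositionOp

theorem absOp_aluthge_of_binormal_general (T U : H →L[ℂ] H)
    (hT : IsPolarDecompositionOp T U)
    (hbin : Commute (adjoint T * T) (T * adjoint T))
    (α β : ℝ) (hβ : 0 < β) :
    absOp (powOp (absOp T) α * U * powOp (absOp T) β) =
        (adjoint U * powOp (absOp T) α * U) * powOp (absOp T) β ∧
    absOp (powOp (absOp T) α * U * powOp (absOp T) β) =
        powOp (absOp T) β * (adjoint U * powOp (absOp T) α * U) ∧
    absOp (adjoint (powOp (absOp T) α * U * powOp (absOp T) β)) =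
        powOp (absOp T) α * powOp (absOp (adjoint T)) β ∧
    absOp (adjoint (powOp (absOp T) α * U * powOp (absOp T) β)) =
        powOp (absOp (adjoint T)) β * powOp (absOp T) α := by
  set a := powOp (absOp T) α
  set b := powOp (absOp T) β
  set c := powOp (absOp (adjoint T)) β
  have ha : 0 ≤ a := powOp_nonneg (absOp_nonneg T) α
  have hb : 0 ≤ b := powOp_nonneg (absOp_nonneg T) β
  have hc : 0 ≤ c := powOp_nonneg (absOp_nonneg _) β
  have hub : SemiconjBy U b c := hT.mul_powOp hβ.le
  have hac : Commute a c := IsBinormal.commute_powOp hbin α β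
  have hfix : U * star U * c = c := by
    rw [star_eq_adjoint]; exact hT.mul_adjoint_mul_powOp_adjoint hβ
  have hXb : Commute (adjoint U * a * U) b := by
    rw [← star_eq_adjoint]
    exact hub.commute_star_mul_mul hb.isSelfAdjoint hc.isSelfAdjoint hac
  have habs : absOp (a * U * b) = adjoint U * a * U * b := by
    refine absOp_eq_of_mul_self_eq (hXb.mul_nonneg ?_ hb) ?_
    · rw [← star_eq_adjoint]; exact star_left_conjugate_nonneg ha U
    · simp only [← star_eq_adjoint]
      exact hub.star_mul_self_eq_of_commute ha.isSelfAdjoint hb.isSelfAdjoint hc.isSelfAdjoint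
        hac hfix
  have habs_adj : absOp (adjoint (a * U * b)) = a * c := by
    refine absOp_eq_of_mul_self_eq (hac.mul_nonneg ha hc) ?_
    rw [adjoint_adjoint, ← star_eq_adjoint]
    exact hub.mul_star_self_eq_of_commute ha.isSelfAdjoint hb.isSelfAdjoint hc.isSelfAdjoint hac
      hfix
  exact ⟨habs, habs.trans hXb.eq, habs_adj, habs_adj.trans hac.eq⟩

/-- For a binormal `T = U|T|` and `T_{α,β} = |T|^α U |T|^β`, one has
`|T_{α,β}| = (U^*|T|^α U)|T|^β = |T|^β (U^*|T|^α U)` and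
`|T_{α,β}^*| = |T|^α |T^*|^β = |T^*|^β |T|^α`. -/
theorem absOp_aluthge_of_binormal (T U : H →L[ℂ] H)
    (hT : IsPolarDecompositionOp T U)
    (hbin : Commute (adjoint T * T) (T * adjoint T))
    (α β : ℝ) (hα : 0 < α) (hβ : 0 < β) :
    absOp (powOp (absOp T) α * U * powOp (absOp T) β) =
        (adjoint U * powOp (absOp T) α * U) * powOp (absOp T) β ∧
    absOp (powOp (absOp T) α * U * powOp (absOp T) β) =
        powOp (absOp T) β * (adjoint U * powOp (absOp T) α * U) ∧
    absOp (adjoint (powOp (absOp T) α * U * powOp (absOp T) β)) =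
        powOp (absOp T) α * powOp (absOp (adjoint T)) β ∧
    absOp (adjoint (powOp (absOp T) α * U * powOp (absOp T) β)) =
        powOp (absOp (adjoint T)) β * powOp (absOp T) α :=
  absOp_aluthge_of_binormal_general T U hT hbin α β hβ
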